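/- Let D ⊂⊂ ℂ^d be a bounded strongly convex C² domain and f ∈ Hol(D,D) hyperbolic (Wolff point τ ∈ ∂D with dilation coefficient β_τ < 1). Then no backward orbit for f with bounded Kobayashi step can converge to τ: if a backward orbit with bounded Kobayashi step converges to σ ∈ ∂D, then σ ≠ τ. -/
import Mathlib


open Filter Metric Topology Set

noncomputable section

/-- The K-region of center `σ`, amplitude `M` and pole `p` in `D`, defined via the
horosphere functions `H` (`H ξ z = h_{ξ,p}(z)` for the fixed pole `p`). -/
def Kregion {d : ℕ} (D : Set (EuclideanSpace ℂ (Fin d)))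
    (k : EuclideanSpace ℂ (Fin d) → EuclideanSpace ℂ (Fin d) → ℝ)
    (H : EuclideanSpace ℂ (Fin d) → EuclideanSpace ℂ (Fin d) → ℝ)
    (σ p : EuclideanSpace ℂ (Fin d)) (M : ℝ) : Set (EuclideanSpace ℂ (Fin d)) :=
  {z ∈ D | Real.log (H σ z) / 2 + k p z < Real.log M}

/-- Corollary 2.8: for a hyperbolic map (Wolff point `τ`, dilation
`β_τ < 1`), no backward orbit with bounded Kobayashi step converges to `τ`. -/
theorem hyperbolic_backward_orbit_avoids_wolff_point
    {d : ℕ} (D : Set (EuclideanSpace ℂ (Fin d)))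
    (hD_open : IsOpen D) (hD_conv : Convex ℝ D) (hD_bdd : Bornology.IsBounded D)
    (k : EuclideanSpace ℂ (Fin d) → EuclideanSpace ℂ (Fin d) → ℝ)
    (f : EuclideanSpace ℂ (Fin d) → EuclideanSpace ℂ (Fin d))
    (hf_hol : DifferentiableOn ℂ f D) (hf_maps : MapsTo f D D)
    (hnofix : ∀ z ∈ D, f z ≠ z)
    (p : EuclideanSpace ℂ (Fin d)) (hp : p ∈ D)
    (τ : EuclideanSpace ℂ (Fin d)) (hτ : τ ∈ frontier D)
    -- `f` is hyperbolic: dilation coefficient at the Wolff point is `β_τ < 1`: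
    (βτ : ℝ) (hβτ_pos : 0 < βτ) (hβτ_lt : βτ < 1)
    (H : EuclideanSpace ℂ (Fin d) → EuclideanSpace ℂ (Fin d) → ℝ)
    -- `H ξ · = h_{ξ,p}` are the horosphere functions with pole `p`:
    (hH : ∀ ξ ∈ frontier D, ∀ z ∈ D, 0 < H ξ z ∧
      Tendsto (fun w => k z w - k p w) (𝓝[D] ξ) (𝓝 (Real.log (H ξ z) / 2)))
    (z : ℕ → EuclideanSpace ℂ (Fin d)) (hzD : ∀ n, z n ∈ D)
    (hback : ∀ n, f (z (n + 1)) = z n)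
    (a : ℝ) (hstep : ∀ n, k (z (n + 1)) (z n) ≤ a)
    (σ : EuclideanSpace ℂ (Fin d)) (hσ : σ ∈ frontier D)
    (hconv : Tendsto z atTop (𝓝 σ))
    -- (a) the backward orbit eventually lies in a K-region centered at `σ` (Lemma 2.6):
    (hKreg : ∃ M > 0, ∀ᶠ n in atTop, z n ∈ Kregion D k H σ p M)
    -- (b) horosphere growth along the backward orbit (Lemma 2.7):
    (hgrowth : ∀ n : ℕ, (1 / βτ) ^ n * H τ (z 0) ≤ H τ (z n))
    -- (c) a sequence in a K-region centered at `σ` converging to `σ` is eventually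
    -- inside every horosphere centered at `σ`:
    (hhoro : ∀ (w : ℕ → EuclideanSpace ℂ (Fin d)) (M : ℝ), 0 < M →
      (∀ᶠ n in atTop, w n ∈ Kregion D k H σ p M) → Tendsto w atTop (𝓝 σ) →
      ∀ R > 0, ∀ᶠ n in atTop, H σ (w n) < R) :
    σ ≠ τ := by
  intro heq
  subst heq
  obtain ⟨M, hM, hKM⟩ := hKreg
  have hsmall := hhoro z M hM hKM hconv 1 one_pos
  have h0 : 0 < H σ (z 0) := (hH σ hσ (z 0) (hzD 0)).1
  have hlt : 1 < 1 / βτ := (one_lt_div hβτ_pos).2 hβτ_lt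
  have hbig : Tendsto (fun n : ℕ => (1 / βτ) ^ n * H σ (z 0)) atTop atTop :=
    (tendsto_pow_atTop_atTop_of_one_lt hlt).atTop_mul_const h0
  have hge : ∀ᶠ n in atTop, (1 : ℝ) ≤ H σ (z n) :=
    (hbig.eventually_ge_atTop 1).mono fun n hn => hn.trans (hgrowth n)
  obtain ⟨n, h1, h2⟩ := (hge.and hsmall).exists
  linarith
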